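/- arXiv:1602.03292 — 2 statements merged into one kernel-verified Lean document; each statement's English description precedes it below -/
import Mathlib

section
/- For every integer n ≥ 1 and every complex number x that is not an integer, G_n(x) = g(x) · (−1)^n · Γ((x+1)/2 + n) / Γ(1 − x/2 + n), where g(x) := √π · 2^{x−1} / ( sin(πx/2) Γ(x) ). -/
open scoped Real

/-- `G n x := ∏_{m=1}^{n} (x+2m−1)/(x−2m)`. -/
noncomputable def G (n : ℕ) (x : ℂ) : ℂ :=
  ∏ m ∈ Finset.Icc 1 n, (x + 2 * (m : ℂ) - 1) / (x - 2 * (m : ℂ))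

/-- `g x := √π · 2^{x−1} / ( sin(πx/2) Γ(x) )`. -/
noncomputable def g (x : ℂ) : ℂ :=
  (Real.sqrt π : ℂ) * (2 : ℂ) ^ (x - 1) / (Complex.sin (π * x / 2) * Complex.Gamma x)


lemma GammaA_ne (x : ℂ) (hx : ∀ k : ℤ, x ≠ (k : ℂ)) (n : ℕ) :
    Complex.Gamma ((x + 1) / 2 + n) ≠ 0 := by
  apply Complex.Gamma_ne_zero
  intro m h
  apply hx (-2 * m - 2 * n - 1)
  push_cast
  linear_combination 2 * h

lemma GammaB_ne (x : ℂ) (hx : ∀ k : ℤ, x ≠ (k : ℂ)) (n : ℕ) :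
    Complex.Gamma (1 - x / 2 + n) ≠ 0 := by
  apply Complex.Gamma_ne_zero
  intro m h
  apply hx (2 * m + 2 * n + 2)
  push_cast
  linear_combination -2 * h

lemma sin_ne (x : ℂ) (hx : ∀ k : ℤ, x ≠ (k : ℂ)) : Complex.sin (π * x / 2) ≠ 0 := by
  rw [Complex.sin_ne_zero_iff]
  intro k h
  apply hx (2 * k)
  have hπ : (π : ℂ) ≠ 0 := Complex.ofReal_ne_zero.mpr Real.pi_ne_zero
  push_cast
  have h2 : (π:ℂ) * x = (π:ℂ) * (2 * k) := by linear_combination 2 * h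
  exact mul_left_cancel₀ hπ h2

lemma key (x : ℂ) (hx : ∀ k : ℤ, x ≠ (k : ℂ)) :
    g x * Complex.Gamma ((x + 1) / 2) = Complex.Gamma (1 - x / 2) := by
  have hΓx : Complex.Gamma x ≠ 0 := Complex.Gamma_ne_zero fun m h => hx (-m) (by push_cast; exact h)
  have hΓh : Complex.Gamma (x / 2) ≠ 0 :=
    Complex.Gamma_ne_zero fun m h => hx (-2 * m) (by push_cast; linear_combination 2 * h)
  have hsin : Complex.sin (π * x / 2) ≠ 0 := sin_ne x hx
  have dup := Complex.Gamma_mul_Gamma_add_half (x / 2)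
  have refl1 := Complex.Gamma_mul_Gamma_one_sub (x / 2)
  have h2 : ((2:ℂ)) ^ (x - 1) * (2:ℂ) ^ (1 - x) = 1 := by
    rw [← Complex.cpow_add _ _ two_ne_zero]
    norm_num
  have hx2 : (2:ℂ) * (x / 2) = x := by ring
  rw [hx2] at dup
  have h12 : x / 2 + 1 / 2 = (x + 1) / 2 := by ring
  rw [h12] at dup
  have hπx : (π:ℂ) * (x / 2) = π * x / 2 := by ring
  rw [hπx, eq_div_iff hsin] at refl1
  have hsq : (Real.sqrt π : ℂ) * (Real.sqrt π : ℂ) = (π : ℂ) := by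
    exact_mod_cast congrArg (Complex.ofReal) (Real.mul_self_sqrt Real.pi_pos.le)
  unfold g
  rw [div_mul_eq_mul_div, div_eq_iff (mul_ne_zero hsin hΓx)]
  apply mul_right_cancel₀ hΓh
  linear_combination (Real.sqrt π : ℂ) * (2:ℂ)^(x-1) * dup - Complex.Gamma x * refl1
    + Complex.Gamma x * (Real.sqrt π : ℂ) * (Real.sqrt π : ℂ) * h2
    + Complex.Gamma x * hsq

/-- For every `n ≥ 1` and every non-integer complex `x`,
`G_n(x) = g(x) (−1)^n Γ((x+1)/2 + n) / Γ(1 − x/2 + n)`. -/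
theorem G_g_form (n : ℕ) (hn : 1 ≤ n) (x : ℂ) (hx : ∀ k : ℤ, x ≠ (k : ℂ)) :
    G n x = g x * (-1 : ℂ) ^ n * Complex.Gamma ((x + 1) / 2 + n) /
      Complex.Gamma (1 - x / 2 + n) := by
  clear hn
  induction n with
  | zero =>
      simp only [G, Nat.cast_zero, add_zero, pow_zero, mul_one]
      rw [show Finset.Icc 1 0 = (∅ : Finset ℕ) by rfl, Finset.prod_empty]
      rw [eq_div_iff (by simpa using GammaB_ne x hx 0), one_mul]
      exact (key x hx).symm
  | succ n ih =>
      have hstep : G (n + 1) x = G n x * ((x + 2 * ((n:ℂ) + 1) - 1) / (x - 2 * ((n:ℂ) + 1))) := by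
        unfold G
        rw [Finset.prod_Icc_succ_top (Nat.le_add_left 1 n)]
        push_cast
        ring
      have hA : (x + 1) / 2 + (n:ℂ) ≠ 0 := by
        intro h
        apply hx (-2 * n - 1)
        push_cast
        linear_combination 2 * h
      have hB : 1 - x / 2 + (n:ℂ) ≠ 0 := by
        intro h
        apply hx (2 * n + 2)
        push_cast
        linear_combination -2 * h
      have hGA := Complex.Gamma_add_one _ hA
      have hGB := Complex.Gamma_add_one _ hB
      have e1 : (x + 1) / 2 + ((n:ℂ) + 1) = ((x + 1) / 2 + n) + 1 := by ring
      have e2 : 1 - x / 2 + ((n:ℂ) + 1) = (1 - x / 2 + n) + 1 := by ring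
      have hΓB := GammaB_ne x hx n
      have hden : x - 2 * ((n:ℂ) + 1) ≠ 0 := by
        intro h
        apply hx (2 * n + 2)
        push_cast
        linear_combination h
      have hfrac : (x + 2 * ((n:ℂ) + 1) - 1) / (x - 2 * ((n:ℂ) + 1))
          = (-((x + 1) / 2 + n)) / (1 - x / 2 + n) := by
        rw [div_eq_div_iff hden hB]
        ring
      rw [hstep, ih]
      push_cast
      rw [e1, e2, hGA, hGB, hfrac, pow_succ, div_mul_div_comm,
        div_eq_div_iff (mul_ne_zero (GammaB_ne x hx n) hB)
          (mul_ne_zero hB (GammaB_ne x hx n))]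
      ring
end

section
/- For every integer n ≥ 1 and every complex number x with x ∉ {0, 1, 2, 4, 6, …, 2n}, the partial fraction decomposition G_n(x)/(x(x−1)) = (−1)^n [ −(1/A_{n0}) · 1/(x−1) + ∑_{m=0}^{n} (−1)^m A_{nm} · 1/(x−2m) ] holds. -/
/-- `A n m` is the coefficient
`A_{nm} := 2^{−2n}/(2m−1) · C(2(n+m), n+m) · C(n+m, 2m)`. -/
noncomputable def A (n m : ℕ) : ℝ :=
  (2 : ℝ) ^ (-(2 * n : ℤ)) / (2 * (m : ℝ) - 1) * (Nat.choose (2 * (n + m)) (n + m)) *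
    (Nat.choose (n + m) (2 * m))

noncomputable def oddProd (j : ℕ) : ℝ := ∏ k ∈ Finset.Icc 1 j, (2*(k:ℝ)+1)

lemma oddProd_pos (j : ℕ) : 0 < oddProd j := by
  apply Finset.prod_pos; intro k _; positivity

lemma oddProd_eq (j : ℕ) : oddProd j * (2^j * (j.factorial : ℝ)) = ((2*j+1).factorial : ℝ) := by
  induction j with
  | zero => simp [oddProd]
  | succ j ih =>
    rw [oddProd, Finset.prod_Icc_succ_top (by omega)]
    have h1 : 2*(j+1)+1 = (2*j+1)+1+1 := by ring
    rw [h1]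
    push_cast [Nat.factorial_succ]
    rw [show oddProd j = ∏ k ∈ Finset.Icc 1 j, (2*(k:ℝ)+1) from rfl] at ih
    push_cast [Nat.factorial_succ] at ih
    linear_combination (2*(j:ℝ)+3)*(2*(j:ℝ)+2)*ih

lemma castIccProd (n : ℕ) : ∏ k ∈ Finset.Icc 1 n, (k:ℝ) = (n.factorial : ℝ) := by
  induction n with
  | zero => simp
  | succ n ih =>
    rw [Finset.prod_Icc_succ_top (by omega), ih, Nat.factorial_succ]
    push_cast; ring

lemma Dprod (n : ℕ) : ∏ m ∈ Finset.Icc 1 n, (2*(n:ℝ)+2-2*(m:ℝ)) = 2^n * (n.factorial : ℝ) := by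
  have h : ∏ m ∈ Finset.Icc 1 n, (2*(n:ℝ)+2-2*(m:ℝ)) = ∏ k ∈ Finset.Icc 1 n, (2*(k:ℝ)) := by
    apply Finset.prod_nbij' (fun m => n+1-m) (fun k => n+1-k)
    · intro a ha; simp at ha ⊢; omega
    · intro a ha; simp at ha ⊢; omega
    · intro a ha; simp at ha ⊢; omega
    · intro a ha; simp at ha ⊢; omega
    · intro a ha; simp at ha
      have : ((n+1-a : ℕ) : ℝ) = (n:ℝ)+1-a := by
        have := ha.2; push_cast [Nat.cast_sub (by omega : a ≤ n+1)]; ring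
      rw [this]; ring
  rw [h, Finset.prod_mul_distrib, Finset.prod_const, castIccProd]
  simp [Nat.card_Icc]

lemma Nprod (n : ℕ) : oddProd n * (∏ m ∈ Finset.Icc 1 n, (2*(n:ℝ)+1+2*(m:ℝ))) = oddProd (2*n) := by
  have h : ∏ m ∈ Finset.Icc 1 n, (2*(n:ℝ)+1+2*(m:ℝ)) = ∏ k ∈ Finset.Ioc n (2*n), (2*(k:ℝ)+1) := by
    apply Finset.prod_nbij' (fun m => n+m) (fun k => k-n)
    · intro a ha; simp at ha; simp; omega
    · intro a ha; simp at ha; simp; omega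
    · intro a ha; simp at ha; omega
    · intro a ha; simp at ha; omega
    · intro a ha; push_cast; ring
  rw [h, oddProd, oddProd]
  have h3 : ∀ j : ℕ, Finset.Icc 1 j = Finset.Ioc 0 j := by
    intro j; ext a; simp; omega
  rw [h3, h3]
  exact Finset.prod_Ioc_consecutive _ (by omega) (by omega)

lemma two_m_sub_one_ne (m : ℕ) : (2*(m:ℝ) - 1) ≠ 0 := by
  rcases Nat.eq_zero_or_pos m with h | h
  · subst h; norm_num
  · have : (1:ℝ) ≤ m := by exact_mod_cast h
    nlinarith

lemma hzp (n : ℕ) : (2:ℝ) ^ (-(2 * n : ℤ)) = ((4:ℝ)^n)⁻¹ := by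
  rw [zpow_neg]
  congr 1
  rw [show ((2*n:ℤ)) = ((2*n:ℕ):ℤ) by push_cast; ring, zpow_natCast, pow_mul]
  norm_num

lemma A_rec (n m : ℕ) (h : m ≤ n) :
    A (n+1) m * (2*(n:ℝ) - 2*(m:ℝ) + 2) = A n m * (2*(n:ℝ) + 2*(m:ℝ) + 1) := by
  have hc1 : ((Nat.choose (2*(n+m)+2) (n+m+1)) : ℝ)
      = 2*(2*((n:ℝ)+m)+1) * (Nat.choose (2*(n+m)) (n+m)) / ((n:ℝ)+m+1) := by
    have := Nat.succ_mul_centralBinom_succ (n+m)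
    have h2 : Nat.centralBinom (n+m+1) = Nat.choose (2*(n+m)+2) (n+m+1) := by
      unfold Nat.centralBinom; congr 1 <;> omega
    have h3 : Nat.centralBinom (n+m) = Nat.choose (2*(n+m)) (n+m) := rfl
    rw [h2, h3] at this
    have h4 : ((n:ℝ)+m+1) ≠ 0 := by positivity
    have hcast := congrArg (Nat.cast : ℕ → ℝ) this
    push_cast at hcast
    field_simp
    linear_combination hcast
  have hc2 : ((Nat.choose (n+m+1) (2*m)) : ℝ)
      = (Nat.choose (n+m) (2*m)) * ((n:ℝ)+m+1) / ((n:ℝ)-m+1) := by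
    have := Nat.choose_mul_succ_eq (n+m) (2*m)
    have h5 : n+m+1 - 2*m = n-m+1 := by omega
    rw [h5] at this
    have h6 : ((n:ℝ)-m+1) ≠ 0 := by
      have : (m:ℝ) ≤ n := by exact_mod_cast h
      nlinarith
    have hcast := congrArg (Nat.cast : ℕ → ℝ) this
    push_cast [Nat.cast_sub h] at hcast
    field_simp
    linarith [hcast]
  unfold A
  rw [show n+1+m = n+m+1 by ring, show 2*(n+m+1) = 2*(n+m)+2 by ring]
  rw [hc1, hc2, hzp, hzp]
  have h4 : ((n:ℝ)+m+1) ≠ 0 := by positivity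
  have h6 : ((n:ℝ)-m+1) ≠ 0 := by
    have : (m:ℝ) ≤ n := by exact_mod_cast h
    nlinarith
  have h8 : ((4:ℝ)^n) ≠ 0 := by positivity
  have h9 := two_m_sub_one_ne m
  field_simp
  ring

lemma fact_ne (k : ℕ) : ((k.factorial : ℝ)) ≠ 0 := by
  exact_mod_cast (Nat.factorial_pos k).ne'

lemma Atop_key (n : ℕ) :
    A (n+1) (n+1) * ((2*(n:ℝ)+2) * (2*(n:ℝ)+1)) * (oddProd n * (2^n * (n.factorial:ℝ)))
      = (4*(n:ℝ)+3) * oddProd (2*n) := by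
  have e1 := oddProd_eq n
  have e2 := oddProd_eq (2*n)
  unfold A
  rw [hzp]
  rw [show n+1+(n+1) = 2*(n+1) by ring, Nat.choose_self]
  have hch : ((Nat.choose (2*(2*(n+1))) (2*(n+1))) : ℝ)
      = ((4*n+4).factorial : ℝ) / (((2*n+2).factorial : ℝ) * ((2*n+2).factorial : ℝ)) := by
    rw [Nat.cast_choose ℝ (by omega : 2*(n+1) ≤ 2*(2*(n+1)))]
    congr 2 <;> try omega
    · congr 1; omega
    · congr 2 <;> omega
  rw [hch, e1]
  have f1 : ((4*n+4).factorial:ℝ) = (4*(n:ℝ)+4)*(4*(n:ℝ)+3)*(4*(n:ℝ)+2) * ((4*n+1).factorial:ℝ) := by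
    rw [show 4*n+4 = (4*n+1)+1+1+1 by ring]
    push_cast [Nat.factorial_succ]
    ring
  have f2 : ((2*n+2).factorial:ℝ) = (2*(n:ℝ)+2)*(2*(n:ℝ)+1) * ((2*n).factorial:ℝ) := by
    rw [show 2*n+2 = (2*n)+1+1 by ring]
    push_cast [Nat.factorial_succ]
    ring
  have f3 : ((2*n+1).factorial:ℝ) = (2*(n:ℝ)+1) * ((2*n).factorial:ℝ) := by
    rw [show 2*n+1 = (2*n)+1 by ring]
    push_cast [Nat.factorial_succ]
    ring
  have e2' : oddProd (2*n) * (2^(2*n) * ((2*n).factorial : ℝ)) = ((4*n+1).factorial : ℝ) := by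
    rw [e2]; congr 2; omega
  have h1 := fact_ne (2*n)
  have h2 := fact_ne (2*n+2)
  have h3 : ((2:ℝ)^(2*n)) ≠ 0 := by positivity
  have h4 : ((4:ℝ)^(n+1)) ≠ 0 := by positivity
  have h5 : (2*(((n+1:ℕ)):ℝ)-1) ≠ 0 := by push_cast; nlinarith [Nat.cast_nonneg (α := ℝ) n]
  have hpow2 : (2:ℝ)^(2*n) = 4^n := by rw [pow_mul]; norm_num
  have hO : oddProd (2*n) = ((4*n+1).factorial : ℝ) / ((4:ℝ)^n * ((2*n).factorial:ℝ)) := by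
    rw [eq_div_iff (by positivity), ← hpow2]
    linear_combination e2'
  rw [hO]
  field_simp
  rw [f1, f2, f3]
  push_cast
  ring

lemma A0_ne (n : ℕ) : A n 0 ≠ 0 := by
  unfold A
  rw [hzp]
  simp only [Nat.add_zero, Nat.cast_zero, Nat.mul_zero, Nat.choose_zero_right, Nat.cast_one,
    mul_one]
  have h1 : ((Nat.choose (2*n) n : ℕ) : ℝ) ≠ 0 := by
    exact_mod_cast (Nat.choose_pos (by omega : n ≤ 2*n)).ne'
  have h2 : ((4:ℝ)^n)⁻¹ ≠ 0 := by positivity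
  have h3 : (2*(0:ℝ) - 1) ≠ 0 := by norm_num
  simp only [mul_zero, zero_sub]
  intro hcon
  rcases mul_eq_zero.1 hcon with h | h
  · rcases div_eq_zero_iff.1 h with h' | h'
    · exact h2 h'
    · norm_num at h'
  · exact h1 h

lemma G_at (n : ℕ) :
    G n (2*((n:ℂ)+1)) =
      (((∏ m ∈ Finset.Icc 1 n, (2*(n:ℝ)+1+2*(m:ℝ))) / (2^n * (n.factorial:ℝ)) : ℝ) : ℂ) := by
  have h1 : G n (2*((n:ℂ)+1))
      = ∏ m ∈ Finset.Icc 1 n, (((2*(n:ℝ)+1+2*(m:ℝ))/(2*(n:ℝ)+2-2*(m:ℝ)) : ℝ) : ℂ) := by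
    unfold G
    refine Finset.prod_congr rfl (fun m hm => ?_)
    push_cast
    congr 1 <;> ring
  rw [h1, ← Complex.ofReal_prod]
  congr 1
  rw [Finset.prod_div_distrib, Dprod]

lemma Atop_c (n : ℕ) :
    ((A (n+1) (n+1) : ℝ) : ℂ) * ((2*((n:ℂ)+1)) * (2*((n:ℂ)+1) - 1))
      = (4*(n:ℂ)+3) * G n (2*((n:ℂ)+1)) := by
  have hkey := Atop_key n
  have hN := Nprod n
  have hopos := (oddProd_pos n).ne'
  have hden : ((2:ℝ)^n * (n.factorial:ℝ)) ≠ 0 := by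
    have := fact_ne n; positivity
  have h2 : A (n+1) (n+1) * ((2*(n:ℝ)+2) * (2*(n:ℝ)+1)) * (2^n * (n.factorial:ℝ))
      = (4*(n:ℝ)+3) * (∏ m ∈ Finset.Icc 1 n, (2*(n:ℝ)+1+2*(m:ℝ))) := by
    apply mul_left_cancel₀ hopos
    calc oddProd n * (A (n+1) (n+1) * ((2*(n:ℝ)+2) * (2*(n:ℝ)+1)) * (2^n * (n.factorial:ℝ)))
        = A (n+1) (n+1) * ((2*(n:ℝ)+2) * (2*(n:ℝ)+1)) * (oddProd n * (2^n * (n.factorial:ℝ))) := by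
          ring
      _ = (4*(n:ℝ)+3) * oddProd (2*n) := hkey
      _ = (4*(n:ℝ)+3) * (oddProd n * (∏ m ∈ Finset.Icc 1 n, (2*(n:ℝ)+1+2*(m:ℝ)))) := by
          rw [hN]
      _ = oddProd n * ((4*(n:ℝ)+3) * (∏ m ∈ Finset.Icc 1 n, (2*(n:ℝ)+1+2*(m:ℝ)))) := by ring
  have hreal : A (n+1) (n+1) * ((2*(n:ℝ)+2) * (2*(n:ℝ)+1))
      = (4*(n:ℝ)+3) * ((∏ m ∈ Finset.Icc 1 n, (2*(n:ℝ)+1+2*(m:ℝ))) / (2^n * (n.factorial:ℝ))) := by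
    rw [mul_div_assoc'] at *
    rw [eq_div_iff hden]
    exact h2
  rw [G_at]
  calc ((A (n+1) (n+1) : ℝ) : ℂ) * ((2*((n:ℂ)+1)) * (2*((n:ℂ)+1) - 1))
      = ((A (n+1) (n+1) * ((2*(n:ℝ)+2) * (2*(n:ℝ)+1)) : ℝ) : ℂ) := by push_cast; ring
    _ = (((4*(n:ℝ)+3) * ((∏ m ∈ Finset.Icc 1 n, (2*(n:ℝ)+1+2*(m:ℝ))) / (2^n * (n.factorial:ℝ))) : ℝ) : ℂ) := by
        rw [hreal]
    _ = (4*(n:ℂ)+3) * (((∏ m ∈ Finset.Icc 1 n, (2*(n:ℝ)+1+2*(m:ℝ))) / (2^n * (n.factorial:ℝ)) : ℝ) : ℂ) := by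
        push_cast; ring

lemma A_rec_div (n m : ℕ) (h : m ≤ n) :
    ((A (n+1) m : ℝ) : ℂ) = (A n m : ℂ) * ((2*(n:ℂ)+2*(m:ℂ)+1) / (2*(n:ℂ)-2*(m:ℂ)+2)) := by
  have h6 : (2*(n:ℝ)-2*(m:ℝ)+2) ≠ 0 := by
    have : (m:ℝ) ≤ n := by exact_mod_cast h
    nlinarith
  have hrec := A_rec n m h
  have hr : A (n+1) m = A n m * ((2*(n:ℝ)+2*(m:ℝ)+1)/(2*(n:ℝ)-2*(m:ℝ)+2)) := by
    rw [mul_div_assoc', eq_div_iff h6]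
    linear_combination hrec
  rw [hr]
  push_cast
  ring

set_option maxHeartbeats 1600000 in
lemma main_aux : ∀ n : ℕ, 1 ≤ n → ∀ x : ℂ, x ≠ 1 → (∀ m : ℕ, m ≤ n → x ≠ 2*(m:ℂ)) →
    G n x / (x * (x - 1)) = (-1 : ℂ) ^ n *
      (-(1 / (A n 0 : ℂ)) * (1 / (x - 1)) +
        ∑ m ∈ Finset.range (n + 1), (-1 : ℂ) ^ m * (A n m : ℂ) * (1 / (x - 2 * (m : ℂ)))) := by
  intro n hn
  induction n, hn using Nat.le_induction with
  | base =>
    intro x hx1 hx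
    have h0 : x ≠ 0 := by have := hx 0 (by omega); simpa using this
    have h2 : x ≠ 2 := by have := hx 1 (by omega); simpa using this
    have hA10 : A 1 0 = -(1/2) := by
      unfold A; rw [hzp]; norm_num
    have hA11 : A 1 1 = 3/2 := by
      unfold A; rw [hzp]; norm_num [Nat.choose]
    have hG1 : G 1 x = (x + 2 - 1)/(x - 2) := by
      unfold G
      rw [Finset.Icc_self, Finset.prod_singleton]
      norm_num
    rw [hG1, Finset.sum_range_succ, Finset.sum_range_succ, Finset.sum_range_zero, hA10, hA11]
    have d1 : x - 1 ≠ 0 := sub_ne_zero.2 hx1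
    have d2 : x - 2 ≠ 0 := sub_ne_zero.2 h2
    push_cast
    simp only [mul_zero, sub_zero]
    field_simp
    ring
  | succ n hn ih =>
    intro x hx1 hx
    have hx' : ∀ m : ℕ, m ≤ n → x ≠ 2*(m:ℂ) := fun m hm => hx m (by omega)
    have hIH := ih x hx1 hx'
    have hx01 : (2*((n:ℂ)+1)) ≠ 1 := by
      intro hcon
      have : ((2*(n+1) : ℕ) : ℂ) = ((1:ℕ):ℂ) := by push_cast; linear_combination hcon
      have := Nat.cast_injective this
      omega
    have hx0m : ∀ m : ℕ, m ≤ n → (2*((n:ℂ)+1)) ≠ 2*(m:ℂ) := by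
      intro m hm hcon
      have : ((2*(n+1) : ℕ) : ℂ) = ((2*m:ℕ):ℂ) := by push_cast; linear_combination hcon
      have := Nat.cast_injective this
      omega
    have hIH0 := ih (2*((n:ℂ)+1)) hx01 hx0m
    have hxm : ∀ m : ℕ, m ≤ n → x - 2*(m:ℂ) ≠ 0 := fun m hm => sub_ne_zero.2 (hx' m hm)
    have hx1d : x - 1 ≠ 0 := sub_ne_zero.2 hx1
    have hxtop : x - 2*((n:ℂ)+1) ≠ 0 := by
      have := hx (n+1) (le_refl _)
      push_cast at this
      exact sub_ne_zero.2 this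
    have hx0md : ∀ m : ℕ, m ≤ n → (2*((n:ℂ)+1)) - 2*(m:ℂ) ≠ 0 :=
      fun m hm => sub_ne_zero.2 (hx0m m hm)
    have hx01d : (2*((n:ℂ)+1)) - 1 ≠ 0 := sub_ne_zero.2 hx01
    have hx00 : (2*((n:ℂ)+1)) ≠ 0 := by
      intro hcon
      have : ((2*(n+1) : ℕ) : ℂ) = ((0:ℕ):ℂ) := by push_cast; linear_combination hcon
      have := Nat.cast_injective this
      omega
    have hsq : (-1:ℂ)^(n+1) * (-1:ℂ)^(n+1) = 1 := by rw [← mul_pow]; norm_num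
    have hsqn : (-1:ℂ)^n * (-1:ℂ)^n = 1 := by rw [← mul_pow]; norm_num
    have hB : (-1:ℂ)^n * (G n x / (x*(x-1)))
        = -(1/(A n 0:ℂ)) * (1/(x-1))
          + ∑ m ∈ Finset.range (n+1), (-1:ℂ)^m * (A n m:ℂ) * (1/(x - 2*(m:ℂ))) := by
      rw [hIH, ← mul_assoc, hsqn, one_mul]
    have hB0 : (-1:ℂ)^n * (G n (2*((n:ℂ)+1)) / ((2*((n:ℂ)+1))*((2*((n:ℂ)+1))-1)))
        = -(1/(A n 0:ℂ)) * (1/((2*((n:ℂ)+1))-1))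
          + ∑ m ∈ Finset.range (n+1), (-1:ℂ)^m * (A n m:ℂ) * (1/((2*((n:ℂ)+1)) - 2*(m:ℂ))) := by
      rw [hIH0, ← mul_assoc, hsqn, one_mul]
    have hA' : ((A (n+1) (n+1) : ℝ) : ℂ)
        = (4*(n:ℂ)+3) * (G n (2*((n:ℂ)+1)) / ((2*((n:ℂ)+1)) * ((2*((n:ℂ)+1)) - 1))) := by
      have h := Atop_c n
      field_simp
      linear_combination h
    have hterm : (-1:ℂ)^(n+1) * ((A (n+1) (n+1) : ℝ) : ℂ)
        = -((4*(n:ℂ)+3) * (-(1/(A n 0:ℂ)) * (1/((2*((n:ℂ)+1))-1))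
          + ∑ m ∈ Finset.range (n+1), (-1:ℂ)^m * (A n m:ℂ) * (1/((2*((n:ℂ)+1)) - 2*(m:ℂ))))) := by
      rw [hA', ← hB0]
      ring
    have hA0c : (A n 0 : ℂ) ≠ 0 := by
      simpa using Complex.ofReal_ne_zero.2 (A0_ne n)
    have hA0c1 : (A (n+1) 0 : ℂ) ≠ 0 := by
      simpa using Complex.ofReal_ne_zero.2 (A0_ne (n+1))
    have h2n1 : (2*(n:ℂ)+1) ≠ 0 := by
      intro hcon
      have : ((2*n+1 : ℕ) : ℂ) = ((0:ℕ):ℂ) := by push_cast; linear_combination hcon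
      have := Nat.cast_injective this
      omega
    have hinv : (1:ℂ)/(A (n+1) 0 : ℂ) = (2*(n:ℂ)+2)/((2*(n:ℂ)+1) * (A n 0:ℂ)) := by
      have hrec' : ((A (n+1) 0 : ℝ) : ℂ) * (2*(n:ℂ)+2) = (A n 0 : ℂ) * (2*(n:ℂ)+1) := by
        have hh := A_rec n 0 (Nat.zero_le n)
        have := congrArg (fun r : ℝ => (r:ℂ)) hh
        push_cast at this
        linear_combination this
      rw [div_eq_div_iff hA0c1 (mul_ne_zero h2n1 hA0c)]
      linear_combination -hrec'
    have hGstep : G (n+1) x = G n x * ((x + 2*((n:ℂ)+1) - 1)/(x - 2*((n:ℂ)+1))) := by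
      unfold G
      rw [Finset.prod_Icc_succ_top (by omega : 1 ≤ n+1)]
      push_cast
      ring
    have hclaim : ∀ m ∈ Finset.range (n+1),
        (-1:ℂ)^m * (A (n+1) m : ℂ) * (1/(x-2*(m:ℂ))) =
        (-((x + 2*((n:ℂ)+1) - 1)/(x - 2*((n:ℂ)+1)))) * ((-1:ℂ)^m * (A n m:ℂ) * (1/(x-2*(m:ℂ))))
        + ((4*(n:ℂ)+3) * (1/(x - 2*((n:ℂ)+1)))) * ((-1:ℂ)^m * (A n m:ℂ) * (1/((2*((n:ℂ)+1)) - 2*(m:ℂ)))) := by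
      intro m hm
      have hm' : m ≤ n := Nat.lt_succ_iff.mp (Finset.mem_range.1 hm)
      rw [A_rec_div n m hm']
      have d1 := hxm m hm'
      have d3 := hx0md m hm'
      have d4 : (2*(n:ℂ) - 2*(m:ℂ) + 2) ≠ 0 := by
        rw [show (2*(n:ℂ)-2*(m:ℂ)+2) = (2*((n:ℂ)+1)) - 2*(m:ℂ) by ring]
        exact d3
      have d5 : (n:ℂ) + 1 - m ≠ 0 := by
        intro h; apply d4; linear_combination 2*h
      have d6 : (n:ℂ) - m + 1 ≠ 0 := by
        intro h; apply d4; linear_combination 2*h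
      field_simp
      ring
    have hmain : (-1:ℂ)^(n+1) * (G (n+1) x / (x*(x-1)))
        = -(1 / (A (n+1) 0 : ℂ)) * (1 / (x - 1)) +
          ∑ m ∈ Finset.range (n+1+1), (-1 : ℂ) ^ m * (A (n+1) m : ℂ) * (1 / (x - 2 * (m : ℂ))) := by
      rw [hGstep]
      have hexp : (-1:ℂ)^(n+1) * (G n x * ((x + 2*((n:ℂ)+1) - 1)/(x - 2*((n:ℂ)+1))) / (x*(x-1)))
          = -(((-1:ℂ)^n * (G n x/(x*(x-1)))) * ((x + 2*((n:ℂ)+1) - 1)/(x - 2*((n:ℂ)+1)))) := by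
        ring
      rw [hexp, hB]
      conv_rhs => rw [Finset.sum_range_succ]
      rw [show ((n+1:ℕ):ℂ) = (n:ℂ)+1 from by push_cast; ring]
      rw [hterm, hinv]
      rw [Finset.sum_congr rfl hclaim, Finset.sum_add_distrib, ← Finset.mul_sum, ← Finset.mul_sum]
      have hI1 : ((x + 2*((n:ℂ)+1) - 1)/(x - 2*((n:ℂ)+1))) * (1/(x-1))
          = -((2*(n:ℂ)+2)/(2*(n:ℂ)+1)) * (1/(x-1))
            + (4*(n:ℂ)+3) * (1/(2*((n:ℂ)+1)-1)) * (1/(x - 2*((n:ℂ)+1))) := by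
        field_simp
        ring
      have hsplit : (2*(n:ℂ)+2)/((2*(n:ℂ)+1) * (A n 0 : ℂ))
          = (2*(n:ℂ)+2)/(2*(n:ℂ)+1) * (1/(A n 0 : ℂ)) := by
        field_simp
      rw [hsplit]
      linear_combination (1/(A n 0 : ℂ)) * hI1
    rw [show G (n+1) x / (x*(x-1)) = (-1:ℂ)^(n+1) * ((-1:ℂ)^(n+1) * (G (n+1) x / (x*(x-1)))) from by
      rw [← mul_assoc, hsq, one_mul]]
    rw [hmain]

/-- For `n ≥ 1` and complex `x ∉ {0, 1, 2, 4, …, 2n}`, the partial fraction decomposition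
`G_n(x)/(x(x−1)) = (−1)^n [ −(1/A_{n0}) · 1/(x−1) + ∑_{m=0}^{n} (−1)^m A_{nm}/(x−2m) ]`. -/
theorem G_partial_fractions (n : ℕ) (hn : 1 ≤ n) (x : ℂ)
    (hx1 : x ≠ 1) (hx : ∀ m : ℕ, m ≤ n → x ≠ 2 * (m : ℂ)) :
    G n x / (x * (x - 1)) = (-1 : ℂ) ^ n *
      (-(1 / (A n 0 : ℂ)) * (1 / (x - 1)) +
        ∑ m ∈ Finset.range (n + 1), (-1 : ℂ) ^ m * (A n m : ℂ) * (1 / (x - 2 * (m : ℂ)))) := by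
  exact main_aux n hn x hx1 hx
end
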